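/- In the setting of the 3×3 mutation matrix M with parameters a,...,f ∈ [0,1] (row sums ≤ 1 as appropriate), if the quadratic factor of χ_M has the double root x₁ = x₂ = 1 - s/2 ≠ 1 (i.e., s² = 4p and s ≠ 0), then M^n converges to the matrix whose every row equals (4/s²) · (ce+cf+de, ae+af+bf, ad+bc+bd). -/

import Mathlib

/-!
The vector `π = (ce+cf+de, ae+af+bf, ad+bc+bd)` is a left eigenvector of `M` for `1`, and the
quadratic factor `x² + (s-2)x + (1-s+p)` of `χ_M` sends `M` to the rank-one matrix `V` with all
rows `π`. When `s² = 4p` this reads `(M - l)² = V = (1-l)² Q` with `l = 1 - s/2` and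
`Q = (4/s²) V`, and together with `Q M = Q` it gives the Jordan-type formula
`M^(n+1) = Q + l^(n+1) (1 - Q) + (n+1) l^n S` for a fixed matrix `S`. As `0 < s ≤ 3`, `|l| < 1`,
so `M^n → Q`.
-/

open Matrix Filter Topology

section PowerDecomposition

variable {A : Type*} [Ring A] [Algebra ℝ A] {M Q : A} {l : ℝ}

theorem sq_sub_smul_one (M : A) (l : ℝ) :
    (M - l • 1) ^ 2 = M * M - (2 * l) • M + l ^ 2 • 1 := by
  simp only [sq, sub_mul, mul_sub, smul_mul_assoc, mul_smul_comm, one_mul, mul_one]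
  module

theorem pow_succ_eq_of_sq_sub_smul_one_eq (hQM : Q * M = Q)
    (hM : (M - l • 1) ^ 2 = (1 - l) ^ 2 • Q) (n : ℕ) :
    M ^ (n + 1) = Q + l ^ (n + 1) • (1 - Q) + ((n + 1) * l ^ n) • (M - l • 1 - (1 - l) • Q) := by
  have hMM : M * M = (2 * l) • M - l ^ 2 • 1 + (1 - l) ^ 2 • Q := by
    rw [← hM, sq_sub_smul_one]; abel
  have hSM : (M - l • 1 - (1 - l) • Q) * M = l • (M - l • 1 - (1 - l) • Q) := by
    rw [sub_mul, sub_mul, smul_mul_assoc, one_mul, smul_mul_assoc, hQM, hMM]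
    module
  induction n with
  | zero =>
    simp only [zero_add, pow_one, Nat.cast_zero, pow_zero, mul_one, one_smul]
    module
  | succ n ih =>
    rw [pow_succ, ih, add_mul, add_mul, smul_mul_assoc, smul_mul_assoc, sub_mul, one_mul, hQM, hSM]
    push_cast
    module

theorem tendsto_pow_of_sq_sub_smul_one_eq [TopologicalSpace A] [ContinuousAdd A]
    [ContinuousSMul ℝ A] (hl : |l| < 1) (hQM : Q * M = Q)
    (hM : (M - l • 1) ^ 2 = (1 - l) ^ 2 • Q) :
    Tendsto (fun n : ℕ => M ^ n) atTop (𝓝 Q) := by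
  have hgeom : Tendsto (fun n : ℕ => l ^ (n + 1)) atTop (𝓝 0) :=
    (tendsto_pow_atTop_nhds_zero_of_abs_lt_one hl).comp (tendsto_add_atTop_nat 1)
  have hlinear : Tendsto (fun n : ℕ => ((n : ℝ) + 1) * l ^ n) atTop (𝓝 0) := by
    have h := (tendsto_self_mul_const_pow_of_abs_lt_one hl).add
      (tendsto_pow_atTop_nhds_zero_of_abs_lt_one hl)
    simpa only [add_mul, one_mul, add_zero] using h
  have h := (tendsto_const_nhds (x := Q)).add
    ((hgeom.smul_const (1 - Q)).add (hlinear.smul_const (M - l • 1 - (1 - l) • Q)))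
  rw [zero_smul, zero_smul, add_zero, add_zero] at h
  rw [← tendsto_add_atTop_iff_nat 1]
  simpa only [pow_succ_eq_of_sq_sub_smul_one_eq hQM hM, add_assoc] using h

end PowerDecomposition

section MutationMatrix

variable (a b c d e f : ℝ)

def mutationMatrix : Matrix (Fin 3) (Fin 3) ℝ :=
  !![1 - a - b, a, b; c, 1 - c - d, d; e, f, 1 - e - f]

/-- Each row lists the principal `2 × 2` minors of `1 - mutationMatrix`, which by the Markov chain
tree theorem form a left eigenvector for the eigenvalue `1`. -/
def mutationStationary : Matrix (Fin 3) (Fin 3) ℝ :=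
  !![c*e + c*f + d*e, a*e + a*f + b*f, a*d + b*c + b*d;
     c*e + c*f + d*e, a*e + a*f + b*f, a*d + b*c + b*d;
     c*e + c*f + d*e, a*e + a*f + b*f, a*d + b*c + b*d]

theorem mutationStationary_mul_mutationMatrix :
    mutationStationary a b c d e f * mutationMatrix a b c d e f = mutationStationary a b c d e f := by
  rw [mutationStationary, mutationMatrix, mul_fin_three]
  ext i j
  fin_cases i <;> fin_cases j <;> simp <;> ring

theorem mutationMatrix_mul_self_add {s p : ℝ} (hs : s = a + b + c + d + e + f)
    (hp : p = a*d + a*e + a*f + b*c + b*d + b*f + c*e + c*f + d*e) :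
    mutationMatrix a b c d e f * mutationMatrix a b c d e f + (s - 2) • mutationMatrix a b c d e f
      + (1 - s + p) • 1 = mutationStationary a b c d e f := by
  subst hs hp
  rw [mutationStationary, mutationMatrix, mul_fin_three, one_fin_three]
  ext i j
  fin_cases i <;> fin_cases j <;> simp <;> ring

theorem mutationMatrix_sub_smul_one_sq {s p : ℝ} (hs : s = a + b + c + d + e + f)
    (hp : p = a*d + a*e + a*f + b*c + b*d + b*f + c*e + c*f + d*e) (hdisc : s ^ 2 = 4 * p) :
    (mutationMatrix a b c d e f - (1 - s / 2) • 1) ^ 2 = mutationStationary a b c d e f := by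
  rw [sq_sub_smul_one, ← mutationMatrix_mul_self_add a b c d e f hs hp,
    show (1 - s / 2) ^ 2 = 1 - s + p by linear_combination hdisc / 4]
  module

end MutationMatrix

theorem stmt_15 (a b c d e f : ℝ)
    (ha : a ∈ Set.Icc (0:ℝ) 1) (hb : b ∈ Set.Icc (0:ℝ) 1)
    (hc : c ∈ Set.Icc (0:ℝ) 1) (hd : d ∈ Set.Icc (0:ℝ) 1)
    (he : e ∈ Set.Icc (0:ℝ) 1) (hf : f ∈ Set.Icc (0:ℝ) 1)
    (hab : a + b ≤ 1) (hcd : c + d ≤ 1) (hef : e + f ≤ 1)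
    (M : Matrix (Fin 3) (Fin 3) ℝ)
    (hM : M = !![1 - a - b, a, b; c, 1 - c - d, d; e, f, 1 - e - f])
    (s p : ℝ) (hs : s = a + b + c + d + e + f)
    (hp : p = a*d + a*e + a*f + b*c + b*d + b*f + c*e + c*f + d*e)
    (hdisc : s ^ 2 = 4 * p) (hs0 : s ≠ 0) :
    ∀ i j : Fin 3,
      Tendsto (fun n : ℕ => (M ^ n) i j) atTop
        (𝓝 (((4 / s ^ 2) •
          !![c*e + c*f + d*e, a*e + a*f + b*f, a*d + b*c + b*d;
             c*e + c*f + d*e, a*e + a*f + b*f, a*d + b*c + b*d;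
             c*e + c*f + d*e, a*e + a*f + b*f, a*d + b*c + b*d] : Matrix (Fin 3) (Fin 3) ℝ) i j)) := by
  intro i j
  change M = mutationMatrix a b c d e f at hM
  change Tendsto _ _ (𝓝 (((4 / s ^ 2) • mutationStationary a b c d e f) i j))
  have hs_nonneg : 0 ≤ s := by rw [hs]; linarith [ha.1, hb.1, hc.1, hd.1, he.1, hf.1]
  have hs_pos : 0 < s := lt_of_le_of_ne hs_nonneg (Ne.symm hs0)
  have hl : |1 - s / 2| < 1 := by rw [abs_lt]; constructor <;> linarith
  have hlim := tendsto_pow_of_sq_sub_smul_one_eq (M := M)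
    (Q := (4 / s ^ 2) • mutationStationary a b c d e f) hl
    (by rw [smul_mul_assoc, hM, mutationStationary_mul_mutationMatrix])
    (by rw [hM, mutationMatrix_sub_smul_one_sq a b c d e f hs hp hdisc, smul_smul,
      show (1 - (1 - s / 2)) ^ 2 * (4 / s ^ 2) = 1 by field_simp; ring, one_smul])
  exact tendsto_pi_nhds.1 (tendsto_pi_nhds.1 hlim i) j
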